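/- arXiv:2205.11389 — 6 statements merged into one kernel-verified Lean document; each statement's English description precedes it below -/
import Mathlib

section
/- Let (Q_k) be a bounded real sequence with Q_{k+1} = Q_k + β_k Υ_k, where β_k ≥ 0. If liminf_{k₁→∞} inf_{k₂≥k₁} ∑_{k=k₁}^{k₂} β_k Υ_k ≥ 0, then (Q_k) converges. -/
/-! By telescoping, the hypothesis says that `Q n ≥ Q m - ε` whenever `n ≥ m ≥ K(ε)`.
Once `n` passes an index where `Q` is within `ε` of its supremum over `[K, ∞)`, `Q n` is trapped in an
interval of length `2ε`, so `Q` is Cauchy. -/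

open Finset Filter

theorem Real.cauchySeq_of_bddAbove_of_forall_sub_le {u : ℕ → ℝ}
    (hbdd : BddAbove (Set.range u))
    (hdrop : ∀ ε > 0, ∃ K, ∀ m ≥ K, ∀ n ≥ m, u m - ε ≤ u n) : CauchySeq u := by
  rw [Metric.cauchySeq_iff']
  intro ε hε
  obtain ⟨K, hK⟩ := hdrop (ε / 2) (half_pos hε)
  set S := u '' Set.Ici K
  have hS : BddAbove S := hbdd.mono (Set.image_subset_range _ _)
  -- An index `N ≥ K` at which `u` comes within `ε / 2` of its supremum after `K`.
  obtain ⟨_, ⟨N, hN, rfl⟩, hlt⟩ :=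
    exists_lt_of_lt_csSup (Set.image_nonempty.mpr Set.nonempty_Ici)
      (sub_lt_self (sSup S) (half_pos hε))
  refine ⟨N, fun n hn => ?_⟩
  have hle : u n ≤ sSup S := le_csSup hS ⟨n, le_trans hN hn, rfl⟩
  have hge : u N - ε / 2 ≤ u n := hK N hN n hn
  rw [Real.dist_eq, abs_lt]
  constructor <;> linarith

theorem bounded_asymptotic_monotone_convergence_general
    (Q Υ β : ℕ → ℝ)
    (hbdd : ∃ C : ℝ, ∀ k, |Q k| ≤ C)
    (hrec : ∀ k, Q (k + 1) = Q k + β k * Υ k)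
    (hliminf : ∀ ε > (0 : ℝ), ∃ K : ℕ, ∀ k₁ ≥ K, ∀ k₂ ≥ k₁,
      (-ε : ℝ) ≤ ∑ k ∈ Icc k₁ k₂, β k * Υ k) :
    ∃ L : ℝ, Tendsto Q atTop (nhds L) := by
  have hsum_eq : ∀ k₁ k₂, k₁ ≤ k₂ →
      ∑ k ∈ Icc k₁ k₂, β k * Υ k = Q (k₂ + 1) - Q k₁ := by
    intro k₁ k₂ hk
    calc ∑ k ∈ Icc k₁ k₂, β k * Υ k = ∑ k ∈ Icc k₁ k₂, (Q (k + 1) - Q k) :=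
          sum_congr rfl fun k _ => by rw [hrec]; ring
      _ = Q (k₂ + 1) - Q k₁ := sum_Icc_sub hk Q
  have hbddAbove : BddAbove (Set.range Q) := by
    obtain ⟨C, hC⟩ := hbdd
    exact ⟨C, Set.forall_mem_range.mpr fun k => (abs_le.mp (hC k)).2⟩
  refine cauchySeq_tendsto_of_complete (Real.cauchySeq_of_bddAbove_of_forall_sub_le hbddAbove ?_)
  intro ε hε
  obtain ⟨K, hK⟩ := hliminf ε hε
  refine ⟨K, fun m hm n hmn => ?_⟩
  obtain rfl | hlt := hmn.eq_or_lt
  · linarith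
  · obtain ⟨k₂, rfl⟩ := Nat.exists_eq_add_of_lt hlt
    have := hK m hm (m + k₂) (Nat.le_add_right m k₂)
    rw [hsum_eq m _ (Nat.le_add_right m k₂)] at this
    linarith

theorem bounded_asymptotic_monotone_convergence
    (Q Υ β : ℕ → ℝ)
    (hbdd : ∃ C : ℝ, ∀ k, |Q k| ≤ C)
    (hβ : ∀ k, 0 ≤ β k)
    (hrec : ∀ k, Q (k + 1) = Q k + β k * Υ k)
    (hliminf : ∀ ε > (0 : ℝ), ∃ K : ℕ, ∀ k₁ ≥ K, ∀ k₂ ≥ k₁,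
      (-ε : ℝ) ≤ ∑ k ∈ Icc k₁ k₂, β k * Υ k) :
    ∃ L : ℝ, Tendsto Q atTop (nhds L) :=
  bounded_asymptotic_monotone_convergence_general Q Υ β hbdd hrec hliminf
end

section
/- Let (Q_k^σ) be bounded real sequences indexed by a finite set σ ∈ I, each satisfying Q_{k+1}^σ = Q_k^σ + β_k Υ_k^σ with β_k ≥ 0 and liminf_{k₁→∞} inf_{k₂≥k₁} ∑_{k=k₁}^{k₂} β_k Υ_k^σ ≥ 0 for every σ. Then for each σ there exists Q_*^σ with Q_k^σ → Q_*^σ as k → ∞. -/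
open Finset Filter

/-! Telescoping the recursion turns the condition on block sums into: for every `ε > 0`,
eventually `Q m - ε ≤ Q n` for all `n ≥ m`. For a bounded sequence this gives
`limsup Q ≤ liminf Q + ε` for every `ε`, so limsup and liminf agree. -/

theorem Real.exists_tendsto_of_eventually_almost_monotone {ι : Type*} [SemilatticeSup ι]
    [Nonempty ι] {u : ι → ℝ} (hbdd : IsBoundedUnder (· ≤ ·) atTop u)
    (hmono : ∀ ε > 0, ∃ K, ∀ m ≥ K, ∀ n ≥ m, u m - ε ≤ u n) :
    ∃ a, Tendsto u atTop (nhds a) := by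
  have hbdd_below : IsBoundedUnder (· ≥ ·) atTop u := by
    obtain ⟨K, hK⟩ := hmono 1 one_pos
    exact isBoundedUnder_of_eventually_ge (eventually_atTop.2 ⟨K, hK K le_rfl⟩)
  have hlimsup_le : limsup u atTop ≤ liminf u atTop := by
    refine le_of_forall_pos_le_add fun ε hε => ?_
    obtain ⟨K, hK⟩ := hmono ε hε
    refine limsup_le_of_le hbdd_below.isCoboundedUnder_le (eventually_atTop.2 ⟨K, fun m hm => ?_⟩)
    have : u m - ε ≤ liminf u atTop :=
      le_liminf_of_le hbdd.isCoboundedUnder_ge (eventually_atTop.2 ⟨m, hK m hm⟩)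
    linarith
  exact ⟨_, tendsto_of_le_liminf_of_limsup_le le_rfl hlimsup_le hbdd hbdd_below⟩

theorem eventually_almost_monotone_of_sum_Icc_ge {u d : ℕ → ℝ}
    (hrec : ∀ k, u (k + 1) = u k + d k)
    (hd : ∀ ε > 0, ∃ K, ∀ k₁ ≥ K, ∀ k₂ ≥ k₁, -ε ≤ ∑ k ∈ Icc k₁ k₂, d k) :
    ∀ ε > 0, ∃ K, ∀ m ≥ K, ∀ n ≥ m, u m - ε ≤ u n := by
  intro ε hε
  obtain ⟨K, hK⟩ := hd ε hε
  refine ⟨K, fun m hm n hn => ?_⟩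
  obtain rfl | ⟨p, hmp, rfl⟩ : n = m ∨ ∃ p, m ≤ p ∧ n = p + 1 := by
    rcases hn.eq_or_lt with h | h
    exacts [Or.inl h.symm, Or.inr ⟨n - 1, by omega, by omega⟩]
  · linarith
  · have htel : ∑ k ∈ Icc m p, d k = u (p + 1) - u m := by
      rw [← sum_Icc_sub hmp]
      exact sum_congr rfl fun k _ => by rw [hrec]; ring
    linarith [hK m hm p hmp]

theorem bounded_asymptotic_monotone_convergence_indexed_general
    (I : Type*)
    (Q Υ : I → ℕ → ℝ) (β : ℕ → ℝ)
    (hbdd : ∀ σ : I, ∃ C : ℝ, ∀ k, |Q σ k| ≤ C)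
    (hrec : ∀ σ : I, ∀ k, Q σ (k + 1) = Q σ k + β k * Υ σ k)
    (hliminf : ∀ σ : I, ∀ ε > (0 : ℝ), ∃ K : ℕ, ∀ k₁ ≥ K, ∀ k₂ ≥ k₁,
      (-ε : ℝ) ≤ ∑ k ∈ Icc k₁ k₂, β k * Υ σ k) :
    ∀ σ : I, ∃ Qstar : ℝ, Tendsto (Q σ) atTop (nhds Qstar) := by
  intro σ
  obtain ⟨C, hC⟩ := hbdd σ
  exact Real.exists_tendsto_of_eventually_almost_monotone
    (isBoundedUnder_of ⟨C, fun k => le_of_abs_le (hC k)⟩)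
    (eventually_almost_monotone_of_sum_Icc_ge (hrec σ) (hliminf σ))

theorem bounded_asymptotic_monotone_convergence_indexed
    (I : Type*) [Fintype I] [Nonempty I]
    (Q Υ : I → ℕ → ℝ) (β : ℕ → ℝ)
    (hbdd : ∀ σ : I, ∃ C : ℝ, ∀ k, |Q σ k| ≤ C)
    (hβ : ∀ k, 0 ≤ β k)
    (hrec : ∀ σ : I, ∀ k, Q σ (k + 1) = Q σ k + β k * Υ σ k)
    (hliminf : ∀ σ : I, ∀ ε > (0 : ℝ), ∃ K : ℕ, ∀ k₁ ≥ K, ∀ k₂ ≥ k₁,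
      (-ε : ℝ) ≤ ∑ k ∈ Icc k₁ k₂, β k * Υ σ k) :
    ∀ σ : I, ∃ Qstar : ℝ, Tendsto (Q σ) atTop (nhds Qstar) :=
  bounded_asymptotic_monotone_convergence_indexed_general I Q Υ β hbdd hrec hliminf
end

section
/- Let γ ∈ [0,1), let (β_k) ⊆ (0,1) with β_k → 0 and ∑ β_k = ∞, and let (e_k) be absolutely summable. If a real sequence (u_k) satisfies u_{k+1} ≥ u_k(1 - (1-γ)β_k) + e_k for all k, then liminf_{k₁→∞} inf_{k₂≥k₁} ∑_{k=k₁}^{k₂} β_k u_k ≥ 0. -/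
/-!
Write `c = 1 - γ` and let `v k = (u k)⁻` be the negative part of `u k`. Because
`0 ≤ 1 - c β k`, the recursion passes to negative parts as
`v (k + 1) ≤ (1 - c β k) v k + |e k|`, i.e. `c β k v k ≤ v k - v (k + 1) + |e k|`.
Summing telescopes, so the nonnegative series `∑ β k v k` is bounded by `(v 0 + ∑ |e k|) / c`
and hence converges. Its tails are therefore eventually small, and
`∑_{k₁ ≤ k ≤ k₂} β k u k ≥ -∑_{k₁ ≤ k ≤ k₂} β k v k`.
-/

open Finset Filter

lemma negPart_le_mul_negPart_add_abs {x y r e : ℝ} (hr : 0 ≤ r) (h : x * r + e ≤ y) :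
    y⁻ ≤ r * x⁻ + |e| := by
  have hx : -x ≤ x⁻ := neg_le_negPart x
  rw [negPart_def]
  refine max_le ?_ (by positivity)
  nlinarith [neg_le_abs e, mul_le_mul_of_nonneg_left hx hr]

lemma summable_mul_of_le_one_sub_mul_add {a v b : ℕ → ℝ} (ha : ∀ k, 0 ≤ a k)
    (hv : ∀ k, 0 ≤ v k) (hb : ∀ k, 0 ≤ b k) (hbs : Summable b)
    (hrec : ∀ k, v (k + 1) ≤ (1 - a k) * v k + b k) :
    Summable fun k => a k * v k := by
  refine summable_of_sum_range_le (c := v 0 + ∑' k, b k)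
    (fun k => mul_nonneg (ha k) (hv k)) fun n => ?_
  calc ∑ k ∈ range n, a k * v k
      ≤ ∑ k ∈ range n, (v k - v (k + 1) + b k) :=
        sum_le_sum fun k _ => by linarith [hrec k]
    _ = v 0 - v n + ∑ k ∈ range n, b k := by rw [sum_add_distrib, sum_range_sub']
    _ ≤ v 0 + ∑' k, b k := by linarith [hv n, hbs.sum_le_tsum (range n) fun k _ => hb k]

lemma Summable.eventually_forall_sum_Icc_mem {G : Type*} [AddCommGroup G] [TopologicalSpace G]
    [IsTopologicalAddGroup G] {f : ℕ → G} (hf : Summable f) {s : Set G} (hs : s ∈ nhds 0) :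
    ∀ᶠ k₁ in atTop, ∀ k₂, ∑ k ∈ Icc k₁ k₂, f k ∈ s := by
  obtain ⟨t, ht⟩ := hf.vanishing hs
  refine eventually_atTop.2 ⟨t.sup id + 1, fun k₁ hk₁ k₂ => ht _ ?_⟩
  refine disjoint_left.2 fun k hk hkt => ?_
  have : k ≤ t.sup id := le_sup (f := id) hkt
  have : k₁ ≤ k := (mem_Icc.1 hk).1
  omega

theorem lemma_two_liminf_nonneg_general
    (γ : ℝ) (hγ : 0 ≤ γ ∧ γ < 1)
    (β : ℕ → ℝ) (hβ : ∀ k, 0 < β k ∧ β k < 1)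
    (e : ℕ → ℝ) (he : Summable fun k => |e k|)
    (u : ℕ → ℝ)
    (hrec : ∀ k, u (k + 1) ≥ u k * (1 - (1 - γ) * β k) + e k) :
    ∀ ε > (0 : ℝ), ∃ K : ℕ, ∀ k₁ ≥ K, ∀ k₂ ≥ k₁,
      (-ε : ℝ) ≤ ∑ k ∈ Icc k₁ k₂, β k * u k := by
  intro ε hε
  have hc : 0 < 1 - γ := by linarith [hγ.2]
  have hneg : ∀ k, (u (k + 1))⁻ ≤ (1 - (1 - γ) * β k) * (u k)⁻ + |e k| := fun k =>
    negPart_le_mul_negPart_add_abs (by nlinarith [hβ k]) (hrec k)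
  have hsum : Summable fun k => β k * (u k)⁻ := by
    have := summable_mul_of_le_one_sub_mul_add (fun k => mul_nonneg hc.le (hβ k).1.le)
      (fun k => negPart_nonneg (u k)) (fun k => abs_nonneg (e k)) he hneg
    simpa [mul_assoc, hc.ne'] using this.mul_left (1 - γ)⁻¹
  obtain ⟨K, hK⟩ := eventually_atTop.1 (hsum.eventually_forall_sum_Icc_mem (Iio_mem_nhds hε))
  refine ⟨K, fun k₁ hk₁ k₂ _ => ?_⟩
  calc -ε ≤ -∑ k ∈ Icc k₁ k₂, β k * (u k)⁻ := neg_le_neg (hK k₁ hk₁ k₂).le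
    _ = ∑ k ∈ Icc k₁ k₂, β k * -(u k)⁻ := by simp only [mul_neg, sum_neg_distrib]
    _ ≤ ∑ k ∈ Icc k₁ k₂, β k * u k :=
        sum_le_sum fun k _ =>
          mul_le_mul_of_nonneg_left (neg_le.1 (neg_le_negPart (u k))) (hβ k).1.le

theorem lemma_two_liminf_nonneg
    (γ : ℝ) (hγ : 0 ≤ γ ∧ γ < 1)
    (β : ℕ → ℝ) (hβ : ∀ k, 0 < β k ∧ β k < 1)
    (hβ0 : Tendsto β atTop (nhds 0))
    (hβdiv : Tendsto (fun n => ∑ k ∈ range n, β k) atTop atTop)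
    (e : ℕ → ℝ) (he : Summable fun k => |e k|)
    (u : ℕ → ℝ)
    (hrec : ∀ k, u (k + 1) ≥ u k * (1 - (1 - γ) * β k) + e k) :
    ∀ ε > (0 : ℝ), ∃ K : ℕ, ∀ k₁ ≥ K, ∀ k₂ ≥ k₁,
      (-ε : ℝ) ≤ ∑ k ∈ Icc k₁ k₂, β k * u k :=
  lemma_two_liminf_nonneg_general γ hγ β hβ e he u hrec
end

section
/- Let (β_k) ⊆ (0,1) with ∑ β_k = ∞, and let (e_k) be absolutely summable. Then ∑_{l=0}^{k-1} |e_l| ∏_{m=l+1}^{k-1} (1-β_m) → 0 as k → ∞. -/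
/-!
For fixed `l`, the weight `∏_{m=l+1}^{k-1} (1 - β_m)` lies in `[0, 1]` and is at most
`exp (-∑_{m=l+1}^{k-1} β_m)`, which tends to `0` as `k → ∞` because `∑ β_m` diverges. The sum is
then a series in `l` dominated by the summable `|e_l|` whose terms vanish pointwise, so it tends
to `0` by Tannery's theorem (dominated convergence for series).
-/

open Finset Filter

lemma Real.prod_one_sub_le_exp_neg_sum {ι : Type*} (s : Finset ι) (β : ι → ℝ)
    (hβ : ∀ i ∈ s, β i ≤ 1) : ∏ i ∈ s, (1 - β i) ≤ Real.exp (-∑ i ∈ s, β i) := by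
  rw [← sum_neg_distrib, Real.exp_sum]
  exact prod_le_prod (fun i hi => sub_nonneg.2 (hβ i hi)) fun i _ => Real.one_sub_le_exp_neg _

lemma tendsto_sum_range_mul_of_tendsto_zero {e : ℕ → ℝ} (he : Summable fun l => |e l|)
    {w : ℕ → ℕ → ℝ} (hw : ∀ k l, |w k l| ≤ 1)
    (hlim : ∀ l, Tendsto (fun k => w k l) atTop (nhds 0)) :
    Tendsto (fun k => ∑ l ∈ range k, e l * w k l) atTop (nhds 0) := by
  set f : ℕ → ℕ → ℝ := fun k l => if l < k then e l * w k l else 0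
  have hsum_eq : ∀ k, ∑ l ∈ range k, e l * w k l = ∑' l, f k l := fun k => by
    rw [tsum_eq_sum (s := range k) fun l hl => if_neg (by simpa using hl)]
    exact sum_congr rfl fun l hl => (if_pos (mem_range.1 hl)).symm
  have hf_lim : ∀ l, Tendsto (f · l) atTop (nhds 0) := fun l => by
    have : Tendsto (fun k => e l * w k l) atTop (nhds 0) := by
      simpa using (hlim l).const_mul (e l)
    refine this.congr' ?_
    filter_upwards [eventually_gt_atTop l] with k hk
    exact (if_pos hk).symm
  have hf_bound : ∀ k l, ‖f k l‖ ≤ |e l| := fun k l => by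
    by_cases hl : l < k
    · simpa [f, hl, abs_mul] using mul_le_of_le_one_right (abs_nonneg (e l)) (hw k l)
    · simp [f, hl]
  simpa [hsum_eq] using
    tendsto_tsum_of_dominated_convergence he hf_lim (Eventually.of_forall hf_bound)

lemma tendsto_prod_Ico_one_sub_atTop_nhds_zero {β : ℕ → ℝ} (hβ : ∀ m, β m ≤ 1)
    (hβdiv : Tendsto (fun n => ∑ m ∈ range n, β m) atTop atTop) (a : ℕ) :
    Tendsto (fun k => ∏ m ∈ Ico a k, (1 - β m)) atTop (nhds 0) := by
  have hsum : Tendsto (fun k => ∑ m ∈ Ico a k, β m) atTop atTop := by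
    refine (tendsto_atTop_add_const_right _ (-∑ m ∈ range a, β m) hβdiv).congr' ?_
    filter_upwards [eventually_ge_atTop a] with k hk
    rw [sum_Ico_eq_sub _ hk, sub_eq_add_neg]
  refine squeeze_zero (fun k => prod_nonneg fun m _ => sub_nonneg.2 (hβ m))
    (fun k => Real.prod_one_sub_le_exp_neg_sum _ _ fun m _ => hβ m) ?_
  exact Real.tendsto_exp_atBot.comp (tendsto_neg_atTop_atBot.comp hsum)

theorem convolution_vanishing
    (β : ℕ → ℝ) (hβ : ∀ k, 0 < β k ∧ β k < 1)
    (hβdiv : Tendsto (fun n => ∑ k ∈ range n, β k) atTop atTop)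
    (e : ℕ → ℝ) (he : Summable fun k => |e k|) :
    Tendsto (fun k => ∑ l ∈ range k, |e l| * ∏ m ∈ Ico (l + 1) k, (1 - β m))
      atTop (nhds 0) := by
  have hβ_le : ∀ m, β m ≤ 1 := fun m => (hβ m).2.le
  refine tendsto_sum_range_mul_of_tendsto_zero (by simpa using he) (fun k l => ?_)
    fun l => tendsto_prod_Ico_one_sub_atTop_nhds_zero hβ_le hβdiv (l + 1)
  rw [abs_of_nonneg (prod_nonneg fun m _ => sub_nonneg.2 (hβ_le m))]
  exact prod_le_one (fun m _ => sub_nonneg.2 (hβ_le m)) fun m _ => by linarith [(hβ m).1]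
end

section
/- Under the single-controller condition p(s'|s,a) = p(s'|s,a^i) for all (s,a,s'), if two Q-iterates Q_k^i and Q_k^j are both generated by the iteration Q_{k+1}(s,a) = Q_k(s,a) + β_k( r(s,a) + γ ∑_{s'} p(s'|s,a) v_k(s') - Q_k(s,a) ) with common r, p, (β_k), common zero initialization, but possibly different value estimates v_k^i, v_k^j, then the difference δQ_k(s,a) := Q_k^i(s,a) - Q_k^j(s,a) depends on a only through a^i; in particular δQ_k(s, ã^j, a^{-j}) = δQ_k(s,a) for all a, ã^j with j ≠ i. -/
open Finset

theorem single_controller_Q_difference_invariance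
    (S Ai Am : Type*) [Fintype S]
    (γ : ℝ)
    (r : S → Ai × Am → ℝ)
    (p : S → Ai → S → ℝ)
    (β : ℕ → ℝ)
    (vi vj : ℕ → S → ℝ)
    (Qi Qj : ℕ → S → Ai × Am → ℝ)
    (hQi0 : ∀ s a, Qi 0 s a = 0)
    (hQj0 : ∀ s a, Qj 0 s a = 0)
    (hreci : ∀ k s a, Qi (k + 1) s a =
      Qi k s a + β k * (r s a + γ * ∑ s', p s a.1 s' * vi k s' - Qi k s a))
    (hrecj : ∀ k s a, Qj (k + 1) s a =
      Qj k s a + β k * (r s a + γ * ∑ s', p s a.1 s' * vj k s' - Qj k s a)) :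
    ∀ k s (ai : Ai) (am am' : Am),
      Qi k s (ai, am) - Qj k s (ai, am) = Qi k s (ai, am') - Qj k s (ai, am') := by
  intro k
  induction k with
  | zero => intro s ai am am'; simp [hQi0, hQj0]
  | succ k ih =>
    intro s ai am am'
    have h := ih s ai am am'
    simp only [hreci, hrecj]
    linear_combination (1 - β k) * h
end

section
/- In a single-controller Markov game where the stage payoffs satisfy r^j(s, ã^j, a^{-j}) - r^j(s, a) = r^i(s, ã^j, a^{-j}) - r^i(s, a) for all s, a, ã^j and all j ≠ i (with i the controller), if Q_k^i and Q_k^j both follow the closed-form iteration Q_{k+1}^m(s,a) = r^m(s,a) ∑_{l=0}^k β_l ∏_{m'=l+1}^k (1-β_{m'}) + γ ∑_{s'} p(s'|s,a^i) ∑_{l=0}^k v_l^m(s') β_l ∏_{m'=l+1}^k (1-β_{m'}), then for every mixed profile π(s) and every best-response action b^j of player j: E_{a∼π(s)}[Q_k^i(s, b^j, a^{-j}) - Q_k^i(s,a)] = E_{a∼π(s)}[r^j(s, b^j, a^{-j}) - r^j(s,a)] · ∑_{l=0}^{k-1} β_l ∏_{m'=l+1}^{k-1} (1-β_{m'}) +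 γ·0, i.e., Γ_k^{ij}(s) equals the stage-payoff improvement scaled by the cumulative step-size weight, and in particular Γ_k^{ij}(s) ≥ 0 when b^j maximizes player j's expected payoff. -/
/-!
Since player `i` alone controls the transitions, the continuation term of both closed-form
iterates depends only on `aⁱ`, so a unilateral deviation of player `j` changes `Qᵢ` and `Qⱼ`
exactly by the stage-payoff change times the cumulative step-size weight; by the
potential-game condition that change is the same for `rⁱ` and `rʲ`. Hence `Γᵢⱼ` is the
expected deviation gain of `Qⱼ`, which is nonnegative when `bʲ` is a best response.
-/

open Finset

theorem expected_deviation_gain_nonneg_of_isBestResponse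
    {Ai Aj Ao : Type*} [Fintype Ai] [Fintype Aj] [Fintype Ao]
    {πi : Ai → ℝ} {πj : Aj → ℝ} {πo : Ao → ℝ} (hπj : ∀ aj, 0 ≤ πj aj)
    {F : Ai × Aj × Ao → ℝ} {bj : Aj}
    (hbest : ∀ aj, ∑ ai, ∑ ao, πi ai * πo ao * F (ai, aj, ao)
      ≤ ∑ ai, ∑ ao, πi ai * πo ao * F (ai, bj, ao)) :
    0 ≤ ∑ ai, ∑ aj, ∑ ao, πi ai * πj aj * πo ao * (F (ai, bj, ao) - F (ai, aj, ao)) := by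
  have hregroup : ∀ aj, ∑ ai, ∑ ao, πi ai * πj aj * πo ao * (F (ai, bj, ao) - F (ai, aj, ao))
      = πj aj * (∑ ai, ∑ ao, πi ai * πo ao * F (ai, bj, ao)
          - ∑ ai, ∑ ao, πi ai * πo ao * F (ai, aj, ao)) := by
    intro aj
    simp only [← sum_sub_distrib, mul_sum]
    exact sum_congr rfl fun _ _ => sum_congr rfl fun _ _ => by ring
  rw [sum_comm]
  exact sum_nonneg fun aj _ =>
    (hregroup aj).symm ▸ mul_nonneg (hπj aj) (sub_nonneg.mpr (hbest aj))

theorem single_controller_potential_gamma_general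
    (S Ai Aj Ao : Type*) [Fintype S] [Fintype Ai] [Fintype Aj] [Fintype Ao]
    (γ : ℝ)
    (β : ℕ → ℝ)
    (ri rj : S → Ai × Aj × Ao → ℝ)
    -- potential-game-like condition: player i is the single controller and
    -- unilateral deviations of player j change r^i and r^j identically
    (hpot : ∀ s (ai : Ai) (aj aj2 : Aj) (ao : Ao),
      rj s (ai, aj2, ao) - rj s (ai, aj, ao) = ri s (ai, aj2, ao) - ri s (ai, aj, ao))
    (p : S → Ai → S → ℝ)
    (vi vj : ℕ → S → ℝ)
    (Qi Qj : ℕ → S → Ai × Aj × Ao → ℝ)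
    -- closed-form unrolled iterations with common r^m, p, β but local value estimates
    (hQi : ∀ k s a, Qi (k + 1) s a =
      ri s a * ∑ l ∈ range (k + 1), β l * ∏ m' ∈ Icc (l + 1) k, (1 - β m')
        + γ * ∑ s', p s a.1 s' *
            ∑ l ∈ range (k + 1), vi l s' * β l * ∏ m' ∈ Icc (l + 1) k, (1 - β m'))
    (hQj : ∀ k s a, Qj (k + 1) s a =
      rj s a * ∑ l ∈ range (k + 1), β l * ∏ m' ∈ Icc (l + 1) k, (1 - β m')
        + γ * ∑ s', p s a.1 s' *
            ∑ l ∈ range (k + 1), vj l s' * β l * ∏ m' ∈ Icc (l + 1) k, (1 - β m'))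
    (πi : S → Ai → ℝ) (πj : S → Aj → ℝ) (πo : S → Ao → ℝ)
    (hπj_nonneg : ∀ s aj, 0 ≤ πj s aj) :
    ∀ (k : ℕ) (s : S) (bj : Aj),
      (∑ ai, ∑ aj, ∑ ao, πi s ai * πj s aj * πo s ao *
          (Qi (k + 1) s (ai, bj, ao) - Qi (k + 1) s (ai, aj, ao))
        = (∑ ai, ∑ aj, ∑ ao, πi s ai * πj s aj * πo s ao *
              (rj s (ai, bj, ao) - rj s (ai, aj, ao)))
            * ∑ l ∈ range (k + 1), β l * ∏ m' ∈ Icc (l + 1) k, (1 - β m') + γ * 0) ∧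
      ((∀ aj' : Aj,
          ∑ ai, ∑ ao, πi s ai * πo s ao * Qj (k + 1) s (ai, aj', ao)
            ≤ ∑ ai, ∑ ao, πi s ai * πo s ao * Qj (k + 1) s (ai, bj, ao)) →
        0 ≤ ∑ ai, ∑ aj, ∑ ao, πi s ai * πj s aj * πo s ao *
            (Qi (k + 1) s (ai, bj, ao) - Qi (k + 1) s (ai, aj, ao))) := by
  intro k s bj
  set w := ∑ l ∈ range (k + 1), β l * ∏ m' ∈ Icc (l + 1) k, (1 - β m')
  -- the continuation terms depend on `a.1` only and cancel
  have hQi_dev : ∀ ai aj ao, Qi (k + 1) s (ai, bj, ao) - Qi (k + 1) s (ai, aj, ao)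
      = (rj s (ai, bj, ao) - rj s (ai, aj, ao)) * w := by
    intro ai aj ao
    rw [hQi, hQi, hpot s ai aj bj ao]
    ring
  have hQj_dev : ∀ ai aj ao, Qj (k + 1) s (ai, bj, ao) - Qj (k + 1) s (ai, aj, ao)
      = (rj s (ai, bj, ao) - rj s (ai, aj, ao)) * w := by
    intro ai aj ao
    rw [hQj, hQj]
    ring
  refine ⟨?_, fun hbest => ?_⟩
  · simp only [hQi_dev, sum_mul, mul_assoc, mul_zero, add_zero]
  · simpa only [hQi_dev, hQj_dev] using
      expected_deviation_gain_nonneg_of_isBestResponse (hπj_nonneg s) hbest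

theorem single_controller_potential_gamma
    (S Ai Aj Ao : Type*) [Fintype S] [Fintype Ai] [Fintype Aj] [Fintype Ao]
    (γ : ℝ) (hγ : 0 ≤ γ ∧ γ < 1)
    (β : ℕ → ℝ) (hβ : ∀ k, 0 < β k ∧ β k < 1)
    (ri rj : S → Ai × Aj × Ao → ℝ)
    -- potential-game-like condition: player i is the single controller and
    -- unilateral deviations of player j change r^i and r^j identically
    (hpot : ∀ s (ai : Ai) (aj aj2 : Aj) (ao : Ao),
      rj s (ai, aj2, ao) - rj s (ai, aj, ao) = ri s (ai, aj2, ao) - ri s (ai, aj, ao))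
    (p : S → Ai → S → ℝ)
    (vi vj : ℕ → S → ℝ)
    (Qi Qj : ℕ → S → Ai × Aj × Ao → ℝ)
    (hQi0 : ∀ s a, Qi 0 s a = 0) (hQj0 : ∀ s a, Qj 0 s a = 0)
    -- closed-form unrolled iterations with common r^m, p, β but local value estimates
    (hQi : ∀ k s a, Qi (k + 1) s a =
      ri s a * ∑ l ∈ range (k + 1), β l * ∏ m' ∈ Icc (l + 1) k, (1 - β m')
        + γ * ∑ s', p s a.1 s' *
            ∑ l ∈ range (k + 1), vi l s' * β l * ∏ m' ∈ Icc (l + 1) k, (1 - β m'))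
    (hQj : ∀ k s a, Qj (k + 1) s a =
      rj s a * ∑ l ∈ range (k + 1), β l * ∏ m' ∈ Icc (l + 1) k, (1 - β m')
        + γ * ∑ s', p s a.1 s' *
            ∑ l ∈ range (k + 1), vj l s' * β l * ∏ m' ∈ Icc (l + 1) k, (1 - β m'))
    (πi : S → Ai → ℝ) (πj : S → Aj → ℝ) (πo : S → Ao → ℝ)
    (hπi_nonneg : ∀ s ai, 0 ≤ πi s ai) (hπi_sum : ∀ s, ∑ ai, πi s ai = 1)
    (hπj_nonneg : ∀ s aj, 0 ≤ πj s aj) (hπj_sum : ∀ s, ∑ aj, πj s aj = 1)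
    (hπo_nonneg : ∀ s ao, 0 ≤ πo s ao) (hπo_sum : ∀ s, ∑ ao, πo s ao = 1) :
    ∀ (k : ℕ) (s : S) (bj : Aj),
      (∑ ai, ∑ aj, ∑ ao, πi s ai * πj s aj * πo s ao *
          (Qi (k + 1) s (ai, bj, ao) - Qi (k + 1) s (ai, aj, ao))
        = (∑ ai, ∑ aj, ∑ ao, πi s ai * πj s aj * πo s ao *
              (rj s (ai, bj, ao) - rj s (ai, aj, ao)))
            * ∑ l ∈ range (k + 1), β l * ∏ m' ∈ Icc (l + 1) k, (1 - β m') + γ * 0) ∧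
      ((∀ aj' : Aj,
          ∑ ai, ∑ ao, πi s ai * πo s ao * Qj (k + 1) s (ai, aj', ao)
            ≤ ∑ ai, ∑ ao, πi s ai * πo s ao * Qj (k + 1) s (ai, bj, ao)) →
        0 ≤ ∑ ai, ∑ aj, ∑ ao, πi s ai * πj s aj * πo s ao *
            (Qi (k + 1) s (ai, bj, ao) - Qi (k + 1) s (ai, aj, ao))) :=
  single_controller_potential_gamma_general S Ai Aj Ao γ β ri rj hpot p vi vj Qi Qj hQi hQj πi πj πo
    hπj_nonneg
end
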